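/- Let G = {x − Sx : x ∈ l∞} where S is the shift operator, and let N = {y ∈ l∞ : y_k = z_k for almost all k, for some z ∈ G}. Then N is a linear subspace of l∞ and the distance from the constant sequence 1 = (1,1,1,...) to N in the sup norm equals 1. -/

import Mathlib

/-!
Sets of density zero form an ideal, so `N` is a subspace. Since `0 ∈ N`, the distance is at most
`1`. Conversely, if `‖1 - y‖ < 1` then `y ≥ δ > 0` everywhere, so the Cesàro means of `y` stay
above `δ`. But the Cesàro means of `x - Sx` telescope to `(x 0 - x n) / n → 0`, and changing a
bounded sequence on a set of density zero does not affect the limit of its Cesàro means.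
-/

open Filter

open scoped Classical in
/-- The sequence of partial densities of `P ⊆ ℕ`. -/
noncomputable def densSeq (P : Set ℕ) (n : ℕ) : ℝ :=
  (((Finset.range n).filter (fun k => k ∈ P)).card : ℝ) / n

/-- `P` has natural density `d`. -/
def HasDensity (P : Set ℕ) (d : ℝ) : Prop :=
  Tendsto (densSeq P) atTop (nhds d)

/-- Statistical convergence of a real sequence to `l`. -/
def StatTendsto (x : ℕ → ℝ) (l : ℝ) : Prop :=
  ∀ ε : ℝ, 0 < ε → HasDensity {n | |x n - l| > ε} 0

/-- The space `l∞` of bounded real sequences with sup norm. -/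
noncomputable abbrev Linf := lp (fun _ : ℕ => ℝ) ⊤

open Topology Finset

lemma densSeq_eq (P : Set ℕ) [DecidablePred (· ∈ P)] (n : ℕ) :
    densSeq P n = #{k ∈ range n | k ∈ P} / n := by
  unfold densSeq
  congr

lemma densSeq_mono {P Q : Set ℕ} (h : Q ⊆ P) (n : ℕ) : densSeq Q n ≤ densSeq P n := by
  classical
  rw [densSeq_eq, densSeq_eq]
  gcongr

lemma densSeq_union_le (P Q : Set ℕ) (n : ℕ) :
    densSeq (P ∪ Q) n ≤ densSeq P n + densSeq Q n := by
  classical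
  simp only [densSeq_eq, Set.mem_union, filter_or, ← add_div]
  gcongr
  exact_mod_cast card_union_le _ _

namespace HasDensity

lemma subset {P Q : Set ℕ} (hP : HasDensity P 0) (h : Q ⊆ P) : HasDensity Q 0 :=
  squeeze_zero (fun n => by unfold densSeq; positivity) (densSeq_mono h) hP

lemma union {P Q : Set ℕ} (hP : HasDensity P 0) (hQ : HasDensity Q 0) :
    HasDensity (P ∪ Q) 0 :=
  squeeze_zero (fun n => by unfold densSeq; positivity) (densSeq_union_le P Q)
    (by simpa using hP.add hQ)

end HasDensity

lemma hasDensity_empty : HasDensity ∅ 0 := by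
  have h : densSeq ∅ = 0 := funext fun n => by simp [densSeq]
  rw [HasDensity, h]
  exact tendsto_const_nhds

noncomputable def cesaroMean (f : ℕ → ℝ) (n : ℕ) : ℝ :=
  (∑ k ∈ range n, f k) / n

lemma cesaroMean_add (f g : ℕ → ℝ) : cesaroMean (f + g) = cesaroMean f + cesaroMean g := by
  funext n
  simp only [cesaroMean, Pi.add_apply, sum_add_distrib, add_div]

lemma le_cesaroMean {f : ℕ → ℝ} {δ : ℝ} (hf : ∀ k, δ ≤ f k) {n : ℕ} (hn : 0 < n) :
    δ ≤ cesaroMean f n := by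
  rw [cesaroMean, le_div_iff₀ (by positivity)]
  calc δ * n = #(range n) • δ := by rw [card_range, nsmul_eq_mul, mul_comm]
    _ ≤ ∑ k ∈ range n, f k := card_nsmul_le_sum _ _ _ fun k _ => hf k

lemma not_tendsto_cesaroMean_zero {f : ℕ → ℝ} {δ : ℝ} (hδ : 0 < δ) (hf : ∀ k, δ ≤ f k) :
    ¬Tendsto (cesaroMean f) atTop (𝓝 0) := fun h =>
  hδ.not_ge <| ge_of_tendsto h <| eventually_gt_atTop 0 |>.mono fun _ hn => le_cesaroMean hf hn

lemma tendsto_cesaroMean_sub_shift {x : ℕ → ℝ} {M : ℝ} (hx : ∀ k, |x k| ≤ M) :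
    Tendsto (cesaroMean fun k => x k - x (k + 1)) atTop (𝓝 0) := by
  refine squeeze_zero_norm (a := fun n : ℕ => 2 * M / n) (fun n => ?_)
    (tendsto_const_nhds.div_atTop tendsto_natCast_atTop_atTop)
  have hsum : |x 0 - x n| ≤ 2 * M := by
    linarith [abs_sub (x 0) (x n), hx 0, hx n]
  rw [cesaroMean, sum_range_sub', Real.norm_eq_abs, abs_div, Nat.abs_cast]
  gcongr

lemma tendsto_cesaroMean_of_hasDensity_support {f : ℕ → ℝ} {C : ℝ} (hC : ∀ k, |f k| ≤ C)
    (hf : HasDensity (Function.support f) 0) : Tendsto (cesaroMean f) atTop (𝓝 0) := by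
  classical
  refine squeeze_zero_norm (fun n => ?_) (by simpa using hf.const_mul C)
  have hsum : |∑ k ∈ range n, f k| ≤ C * #{k ∈ range n | f k ≠ 0} := by
    calc |∑ k ∈ range n, f k| = |∑ k ∈ range n with f k ≠ 0, f k| := by
          rw [sum_filter_ne_zero]
      _ ≤ ∑ k ∈ range n with f k ≠ 0, |f k| := abs_sum_le_sum_abs _ _
      _ ≤ #{k ∈ range n | f k ≠ 0} • C := sum_le_card_nsmul _ _ _ fun k _ => hC k
      _ = C * #{k ∈ range n | f k ≠ 0} := by rw [nsmul_eq_mul, mul_comm]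
  rw [cesaroMean, densSeq_eq, Real.norm_eq_abs, abs_div, Nat.abs_cast, mul_div_assoc']
  gcongr
  simpa using hsum

/-- The space `N`: `x - Sx` is a coboundary of the shift `S`. -/
def almostCoboundary : Submodule ℝ Linf where
  carrier := {y | ∃ x : Linf, HasDensity {k | y k ≠ x k - x (k + 1)} 0}
  zero_mem' := ⟨0, by simpa using hasDensity_empty⟩
  add_mem' := by
    rintro y z ⟨x, hx⟩ ⟨w, hw⟩
    refine ⟨x + w, (hx.union hw).subset fun k hk => ?_⟩
    contrapose! hk
    simp only [Set.mem_union, Set.mem_ofPred_eq, not_or, not_not] at hk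
    simp only [Set.mem_ofPred_eq, lp.coeFn_add, Pi.add_apply, hk.1, hk.2, not_not]
    ring
  smul_mem' := by
    rintro c y ⟨x, hx⟩
    refine ⟨c • x, hx.subset fun k hk => ?_⟩
    contrapose! hk
    simp only [Set.mem_ofPred_eq, not_not] at hk
    simp only [Set.mem_ofPred_eq, lp.coeFn_smul, Pi.smul_apply, smul_eq_mul, hk, not_not]
    ring

lemma abs_apply_le_norm (f : Linf) (k : ℕ) : |f k| ≤ ‖f‖ :=
  lp.norm_apply_le_norm ENNReal.top_ne_zero f k

lemma tendsto_cesaroMean_of_mem_almostCoboundary {y : Linf} (hy : y ∈ almostCoboundary) :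
    Tendsto (cesaroMean y) atTop (𝓝 0) := by
  obtain ⟨x, hx⟩ := hy
  have hcob : Tendsto (cesaroMean fun k => x k - x (k + 1)) atTop (𝓝 0) :=
    tendsto_cesaroMean_sub_shift (abs_apply_le_norm x)
  have herr : Tendsto (cesaroMean fun k => y k - (x k - x (k + 1))) atTop (𝓝 0) := by
    refine tendsto_cesaroMean_of_hasDensity_support (C := ‖y‖ + 2 * ‖x‖) (fun k => ?_)
      (by simpa only [Function.support, sub_ne_zero] using hx)
    have := abs_sub (y k) (x k - x (k + 1))
    have := abs_sub (x k) (x (k + 1))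
    linarith [abs_apply_le_norm y k, abs_apply_le_norm x k, abs_apply_le_norm x (k + 1)]
  have hsplit : (y : ℕ → ℝ) = (fun k => y k - (x k - x (k + 1))) + fun k => x k - x (k + 1) := by
    funext k
    simp
  rw [hsplit, cesaroMean_add, ← add_zero (0 : ℝ)]
  exact herr.add hcob

lemma one_le_dist_one_of_mem_almostCoboundary {y : Linf} (hy : y ∈ almostCoboundary) :
    1 ≤ dist 1 y := by
  by_contra! h
  have hlower : ∀ k, 1 - dist 1 y ≤ y k := fun k => by
    have := abs_apply_le_norm (1 - y) k
    rw [lp.coeFn_sub, lp.infty_coeFn_one, Pi.sub_apply, Pi.one_apply, ← dist_eq_norm] at this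
    linarith [le_abs_self (1 - y k)]
  exact not_tendsto_cesaroMean_zero (by linarith) hlower
    (tendsto_cesaroMean_of_mem_almostCoboundary hy)

theorem N_subspace_and_dist_one :
    ∃ N : Submodule ℝ Linf,
      -- `N` consists of the sequences agreeing a.a.k with some element `z = x - Sx` of `G`
      (N : Set Linf) =
        {y : Linf | ∃ x : Linf, HasDensity {k | y k ≠ x k - x (k + 1)} 0} ∧
      Metric.infDist (1 : Linf) (N : Set Linf) = 1 := by
  refine ⟨almostCoboundary, rfl, le_antisymm ?_ ?_⟩
  · simpa using Metric.infDist_le_dist_of_mem (x := (1 : Linf)) almostCoboundary.zero_mem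
  · exact (Metric.le_infDist ⟨0, almostCoboundary.zero_mem⟩).2 fun y hy =>
      one_le_dist_one_of_mem_almostCoboundary hy
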